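/- arXiv:2207.09299 — 4 statements merged into one kernel-verified Lean document; each statement's English description precedes it below -/
import Mathlib

section
/- Let A : ℝⁿ → ℝ^{n×n} and g : ℝⁿ → ℝ^{n×m} be continuous, let Q be a symmetric positive semidefinite n×n real matrix and R a symmetric positive definite m×m real matrix, and set f(x) = A(x)x. Let P : ℝⁿ → ℝ^{n×n} be continuously differentiable with P(x) symmetric for all x, solving pointwise P(x)A(x) + A(x)ᵀP(x) − P(x)g(x)R⁻¹g(x)ᵀP(x) + Q = 0 for every x. Define V(x) = ½ xᵀP(x)x, so that ∇V(x) = P(x)x + φ(x) with φ(x)_k = ½ Σ_{i,j} x_i x_j ∂_{x_k}P_{ij}(x). Then the Hamilton–Jacobi–Bellman residual satisfies, for every x ∈ ℝⁿ, N(x,V) := −½ ∇V(x)ᵀ g(x) R⁻¹ g(x)ᵀ ∇V(x) + ∇V(x)ᵀ f(x) + ½ xᵀQx = φ(x)ᵀ( A(x) − g(x)R⁻¹g(x)ᵀP(x) )x − ½ φ(x)ᵀ g(x) R⁻¹ g(x)ᵀ φ(x). -/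
/-! Differentiating `V(x) = ½ xᵀP(x)x` gives `∇V = P(x)x + φ(x)`, the two terms in which the
derivative hits `x` merging by symmetry of `P(x)`. With `S = gR⁻¹gᵀ`, which is symmetric since `R`
is, the Riccati equation tested against `x` reads `xᵀQx = (Px)ᵀS(Px) − 2(Px)ᵀAx`; substituted
into the residual it cancels every term not involving `φ`. -/

open Matrix

namespace Matrix

variable {ι κ α : Type*}

theorem dotProduct_transpose_mul_mulVec [Fintype ι] [Fintype κ] [CommSemiring α]
    (A : Matrix ι κ α) (B : Matrix ι ι α) (v : κ → α) (w : ι → α) :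
    v ⬝ᵥ (Aᵀ * B) *ᵥ w = (A *ᵥ v) ⬝ᵥ B *ᵥ w := by
  rw [← mulVec_mulVec, dotProduct_mulVec, vecMul_transpose]

theorem IsSymm.dotProduct_mulVec_comm [Fintype ι] [CommSemiring α] {A : Matrix ι ι α}
    (hA : A.IsSymm) (v w : ι → α) : v ⬝ᵥ A *ᵥ w = w ⬝ᵥ A *ᵥ v := by
  rw [dotProduct_mulVec, ← mulVec_transpose, hA.eq, dotProduct_comm]

theorem IsSymm.mul_mul_transpose [Fintype κ] [CommSemiring α] {A : Matrix κ κ α}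
    (hA : A.IsSymm) (B : Matrix ι κ α) : (B * A * Bᵀ).IsSymm := by
  rw [IsSymm, transpose_mul, transpose_mul, transpose_transpose, hA.eq, Matrix.mul_assoc]

end Matrix

section Riccati

variable {ι K : Type*} [Fintype ι]

theorem riccati_quadForm [CommRing K] {P A S Q : Matrix ι ι K} (hP : P.IsSymm)
    (hRic : P * A + Aᵀ * P - P * S * P + Q = 0) (x : ι → K) :
    x ⬝ᵥ Q *ᵥ x = (P *ᵥ x) ⬝ᵥ S *ᵥ (P *ᵥ x) - 2 * ((P *ᵥ x) ⬝ᵥ A *ᵥ x) := by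
  have hQ : Q = Pᵀ * S * P - Pᵀ * A - Aᵀ * P := by
    rw [eq_neg_of_add_eq_zero_right hRic, hP.eq]; abel
  rw [hQ, Matrix.mul_assoc, sub_mulVec, sub_mulVec, dotProduct_sub, dotProduct_sub,
    dotProduct_transpose_mul_mulVec, dotProduct_transpose_mul_mulVec,
    dotProduct_transpose_mul_mulVec, ← mulVec_mulVec, dotProduct_comm (A *ᵥ x)]
  ring

theorem hjb_residual_of_riccati [Field K] [CharZero K] {P A S Q : Matrix ι ι K}
    (hP : P.IsSymm) (hS : S.IsSymm)
    (hRic : P * A + Aᵀ * P - P * S * P + Q = 0) (x ψ : ι → K) :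
    -(1/2) * ((P *ᵥ x + ψ) ⬝ᵥ S *ᵥ (P *ᵥ x + ψ)) + (P *ᵥ x + ψ) ⬝ᵥ A *ᵥ x
        + (1/2) * (x ⬝ᵥ Q *ᵥ x)
      = ψ ⬝ᵥ (A - S * P) *ᵥ x - (1/2) * (ψ ⬝ᵥ S *ᵥ ψ) := by
  rw [riccati_quadForm hP hRic, sub_mulVec, ← mulVec_mulVec, dotProduct_sub]
  simp only [mulVec_add, dotProduct_add, add_dotProduct]
  rw [hS.dotProduct_mulVec_comm (P *ᵥ x) ψ]
  ring

end Riccati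

section Gradient

variable {ι 𝕜 : Type*} [Fintype ι] [NontriviallyNormedField 𝕜]

theorem differentiableAt_dotProduct_mulVec_self {P : (ι → 𝕜) → Matrix ι ι 𝕜} {x : ι → 𝕜}
    (hP : ∀ i j, DifferentiableAt 𝕜 (fun y => P y i j) x) :
    DifferentiableAt 𝕜 (fun y => y ⬝ᵥ P y *ᵥ y) x := by
  simp only [dotProduct, mulVec]
  fun_prop

theorem fderiv_dotProduct_mulVec_self_apply {P : (ι → 𝕜) → Matrix ι ι 𝕜} {x : ι → 𝕜}
    (hP : ∀ i j, DifferentiableAt 𝕜 (fun y => P y i j) x) (v : ι → 𝕜) :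
    fderiv 𝕜 (fun y => y ⬝ᵥ P y *ᵥ y) x v
      = v ⬝ᵥ P x *ᵥ x + x ⬝ᵥ P x *ᵥ v
        + ∑ i, ∑ j, x i * x j * fderiv 𝕜 (fun y => P y i j) x v := by
  have hsum : (fun y => y ⬝ᵥ P y *ᵥ y) = fun y => ∑ i, ∑ j, y i * P y i j * y j := by
    funext y
    simp only [dotProduct, mulVec, Finset.mul_sum, mul_assoc]
  have hderiv := HasFDerivAt.fun_sum (u := Finset.univ) fun i _ =>
    HasFDerivAt.fun_sum (u := Finset.univ) fun j _ =>
    (((ContinuousLinearMap.proj i).hasFDerivAt.mul (hP i j).hasFDerivAt).mul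
      (ContinuousLinearMap.proj j).hasFDerivAt :
        HasFDerivAt (fun y : ι → 𝕜 => y i * P y i j * y j) _ x)
  rw [hsum, hderiv.fderiv]
  simp only [FunLike.coe_sum, Finset.sum_apply, _root_.add_apply, _root_.smul_apply,
    ContinuousLinearMap.proj_apply, Pi.mul_apply, dotProduct, mulVec, Finset.mul_sum,
    ← Finset.sum_add_distrib]
  exact Finset.sum_congr rfl fun i _ => Finset.sum_congr rfl fun j _ => by ring

theorem fderiv_half_dotProduct_mulVec_self_single [CharZero 𝕜] [DecidableEq ι]
    {P : (ι → 𝕜) → Matrix ι ι 𝕜} {x : ι → 𝕜}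
    (hP : ∀ i j, DifferentiableAt 𝕜 (fun y => P y i j) x) (hPx : (P x).IsSymm) (k : ι) :
    fderiv 𝕜 (fun y => (1/2) * (y ⬝ᵥ P y *ᵥ y)) x (Pi.single k 1)
      = (P x *ᵥ x) k
        + (1/2) * ∑ i, ∑ j, x i * x j * fderiv 𝕜 (fun y => P y i j) x (Pi.single k 1) := by
  rw [fderiv_const_mul (differentiableAt_dotProduct_mulVec_self hP),
    _root_.smul_apply, fderiv_dotProduct_mulVec_self_apply hP,
    hPx.dotProduct_mulVec_comm x, single_one_dotProduct, smul_eq_mul]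
  ring

end Gradient

theorem sdre_hjb_residual_formula_general (n m : ℕ)
    (A : (Fin n → ℝ) → Matrix (Fin n) (Fin n) ℝ)
    (g : (Fin n → ℝ) → Matrix (Fin n) (Fin m) ℝ)
    (Q : Matrix (Fin n) (Fin n) ℝ)
    (R : Matrix (Fin m) (Fin m) ℝ) (hR : R.PosDef)
    (f : (Fin n → ℝ) → Fin n → ℝ) (hf : ∀ x, f x = (A x).mulVec x)
    (P : (Fin n → ℝ) → Matrix (Fin n) (Fin n) ℝ)
    (hP : ∀ i j, ContDiff ℝ 1 (fun x => P x i j))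
    (hPsymm : ∀ x, (P x).IsSymm)
    (hSDRE : ∀ x, P x * A x + (A x)ᵀ * P x - P x * g x * R⁻¹ * (g x)ᵀ * P x + Q = 0)
    (V : (Fin n → ℝ) → ℝ)
    (hV : ∀ x, V x = (1/2) * (x ⬝ᵥ (P x).mulVec x))
    (φ : (Fin n → ℝ) → Fin n → ℝ)
    (hφ : ∀ x k, φ x k
      = (1/2) * ∑ i, ∑ j, x i * x j * fderiv ℝ (fun y => P y i j) x (Pi.single k 1)) :
    ∀ x : Fin n → ℝ,
      -(1/2) * ((fun k => fderiv ℝ V x (Pi.single k 1)) ⬝ᵥ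
          (g x * R⁻¹ * (g x)ᵀ).mulVec (fun k => fderiv ℝ V x (Pi.single k 1)))
        + (fun k => fderiv ℝ V x (Pi.single k 1)) ⬝ᵥ f x
        + (1/2) * (x ⬝ᵥ Q.mulVec x)
      = φ x ⬝ᵥ (A x - g x * R⁻¹ * (g x)ᵀ * P x).mulVec x
        - (1/2) * (φ x ⬝ᵥ (g x * R⁻¹ * (g x)ᵀ).mulVec (φ x)) := by
  intro x
  have hgrad : (fun k => fderiv ℝ V x (Pi.single k 1)) = P x *ᵥ x + φ x := by
    funext k
    rw [funext hV, fderiv_half_dotProduct_mulVec_self_single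
      (fun i j => (hP i j).differentiable one_ne_zero x) (hPsymm x), Pi.add_apply, hφ]
  have hS : (g x * R⁻¹ * (g x)ᵀ).IsSymm :=
    (isHermitian_iff_isSymm.mp hR.isHermitian).inv.mul_mul_transpose (g x)
  have hRic : P x * A x + (A x)ᵀ * P x - P x * (g x * R⁻¹ * (g x)ᵀ) * P x + Q = 0 := by
    simpa only [Matrix.mul_assoc] using hSDRE x
  rw [hgrad, hf]
  exact hjb_residual_of_riccati (hPsymm x) hS hRic x (φ x)

/-- For a pointwise SDRE solution `P` and `V(x) = ½xᵀP(x)x` (whose gradient is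
`∇V(x) = P(x)x + φ(x)` with `φ(x)_k = ½ Σ_{i,j} x_i x_j ∂_{x_k}P_{ij}(x)`), the HJB
residual satisfies
`N(x,V) = φ(x)ᵀ(A(x) − g(x)R⁻¹g(x)ᵀP(x))x − ½ φ(x)ᵀ g(x)R⁻¹g(x)ᵀ φ(x)`. -/
theorem sdre_hjb_residual_formula (n m : ℕ) (hn : 0 < n) (hm : 0 < m)
    (A : (Fin n → ℝ) → Matrix (Fin n) (Fin n) ℝ)
    (g : (Fin n → ℝ) → Matrix (Fin n) (Fin m) ℝ)
    (hA : ∀ i j, Continuous fun x => A x i j)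
    (hg : ∀ i j, Continuous fun x => g x i j)
    (Q : Matrix (Fin n) (Fin n) ℝ) (hQ : Q.PosSemidef)
    (R : Matrix (Fin m) (Fin m) ℝ) (hR : R.PosDef)
    (f : (Fin n → ℝ) → Fin n → ℝ) (hf : ∀ x, f x = (A x).mulVec x)
    (P : (Fin n → ℝ) → Matrix (Fin n) (Fin n) ℝ)
    (hP : ∀ i j, ContDiff ℝ 1 (fun x => P x i j))
    (hPsymm : ∀ x, (P x).IsSymm)
    (hSDRE : ∀ x, P x * A x + (A x)ᵀ * P x - P x * g x * R⁻¹ * (g x)ᵀ * P x + Q = 0)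
    (V : (Fin n → ℝ) → ℝ)
    (hV : ∀ x, V x = (1/2) * (x ⬝ᵥ (P x).mulVec x))
    (φ : (Fin n → ℝ) → Fin n → ℝ)
    (hφ : ∀ x k, φ x k
      = (1/2) * ∑ i, ∑ j, x i * x j * fderiv ℝ (fun y => P y i j) x (Pi.single k 1)) :
    ∀ x : Fin n → ℝ,
      -(1/2) * ((fun k => fderiv ℝ V x (Pi.single k 1)) ⬝ᵥ
          (g x * R⁻¹ * (g x)ᵀ).mulVec (fun k => fderiv ℝ V x (Pi.single k 1)))
        + (fun k => fderiv ℝ V x (Pi.single k 1)) ⬝ᵥ f x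
        + (1/2) * (x ⬝ᵥ Q.mulVec x)
      = φ x ⬝ᵥ (A x - g x * R⁻¹ * (g x)ᵀ * P x).mulVec x
        - (1/2) * (φ x ⬝ᵥ (g x * R⁻¹ * (g x)ᵀ).mulVec (φ x)) :=
  sdre_hjb_residual_formula_general n m A g Q R hR f hf P hP hPsymm hSDRE V hV φ hφ
end

section
/- Let ε ∈ ℝ and x₁ ∈ ℝ, and set a = ε x₁², s = √(a² + 1), p₁₂ = a + s, p₂₂ = √(1 + 2p₁₂), p₁₁ = s · p₂₂. Then the symmetric matrix P = [[p₁₁, p₁₂],[p₁₂, p₂₂]] is well defined (1 + 2p₁₂ > 0) and solves the state-dependent algebraic Riccati equation P A + Aᵀ P − P B Bᵀ P + I₂ = 0, where A = [[0, 1],[a, 0]] and B = (0, 1)ᵀ. -/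
open Matrix

/-!
Writing `P = !![p₁₁, p₁₂; p₁₂, p₂₂]`, the Riccati residual `PA + AᵀP − PBBᵀP + I₂` is the symmetric
matrix with entries `1 + 2ap₁₂ − p₁₂²`, `p₁₁ + ap₂₂ − p₁₂p₂₂` and `1 + 2p₁₂ − p₂₂²`. The equation
therefore decouples: `p₁₂` is a root of `p² − 2ap − 1`, then `p₂₂ = √(1 + 2p₁₂)` and
`p₁₁ = (p₁₂ − a)p₂₂ = s p₂₂`. Choosing the root `a + s` with `s = √(a² + 1) > |a|` makes `p₁₂`
positive, so the square root defining `p₂₂` is taken of a positive number.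
-/

theorem riccati_residual_fin_two {R : Type*} [CommRing R] (a p₁₁ p₁₂ p₂₂ : R) :
    !![p₁₁, p₁₂; p₁₂, p₂₂] * !![0, 1; a, 0] + (!![0, 1; a, 0])ᵀ * !![p₁₁, p₁₂; p₁₂, p₂₂]
        - !![p₁₁, p₁₂; p₁₂, p₂₂] * (!![0; 1] : Matrix (Fin 2) (Fin 1) R)
          * (!![0; 1] : Matrix (Fin 2) (Fin 1) R)ᵀ * !![p₁₁, p₁₂; p₁₂, p₂₂] + 1
      = !![1 + 2 * a * p₁₂ - p₁₂ ^ 2, p₁₁ + a * p₂₂ - p₁₂ * p₂₂;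
           p₁₁ + a * p₂₂ - p₁₂ * p₂₂, 1 + 2 * p₁₂ - p₂₂ ^ 2] := by
  ext i j
  fin_cases i <;> fin_cases j <;>
    simp [Matrix.mul_apply, Matrix.vecMul, dotProduct, Fin.sum_univ_succ] <;> ring

theorem abs_lt_sqrt_sq_add_one (a : ℝ) : |a| < √(a ^ 2 + 1) := by
  rw [← Real.sqrt_sq_eq_abs]
  exact Real.sqrt_lt_sqrt (sq_nonneg a) (lt_add_one _)

theorem add_sqrt_sq_add_one_pos (a : ℝ) : 0 < a + √(a ^ 2 + 1) := by
  linarith [neg_abs_le a, abs_lt_sqrt_sq_add_one a]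

theorem sdre_closed_form_2d_nonlinear_general
    (a s p₁₂ p₂₂ p₁₁ : ℝ)
    (hs : s = Real.sqrt (a ^ 2 + 1))
    (h12 : p₁₂ = a + s) (h22 : p₂₂ = Real.sqrt (1 + 2 * p₁₂)) (h11 : p₁₁ = s * p₂₂)
    (P : Matrix (Fin 2) (Fin 2) ℝ) (hP : P = !![p₁₁, p₁₂; p₁₂, p₂₂])
    (A : Matrix (Fin 2) (Fin 2) ℝ) (hA : A = !![0, 1; a, 0])
    (B : Matrix (Fin 2) (Fin 1) ℝ) (hB : B = !![0; 1]) :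
    1 + 2 * p₁₂ > 0 ∧ P * A + Aᵀ * P - P * B * Bᵀ * P + 1 = 0 := by
  have hp₁₂ : 0 < p₁₂ := h12 ▸ hs ▸ add_sqrt_sq_add_one_pos a
  have hpos : 1 + 2 * p₁₂ > 0 := by linarith
  have hs2 : s ^ 2 = a ^ 2 + 1 := hs ▸ Real.sq_sqrt (by positivity)
  have hp2 : p₂₂ ^ 2 = 1 + 2 * p₁₂ := h22 ▸ Real.sq_sqrt hpos.le
  have e₁₁ : 1 + 2 * a * p₁₂ - p₁₂ ^ 2 = 0 := by rw [h12]; linear_combination -hs2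
  have e₁₂ : p₁₁ + a * p₂₂ - p₁₂ * p₂₂ = 0 := by rw [h11, h12]; ring
  have e₂₂ : 1 + 2 * p₁₂ - p₂₂ ^ 2 = 0 := by rw [hp2]; ring
  refine ⟨hpos, ?_⟩
  rw [hP, hA, hB, riccati_residual_fin_two, e₁₁, e₁₂, e₂₂]
  exact Matrix.etaExpand_eq 0

/-- Closed-form pointwise solution of the state-dependent Riccati equation for the 2D
nonlinear example `A = [[0,1],[εx₁²,0]]`, `B = (0,1)ᵀ`, `Q = R = I₂`:  with `a = εx₁²`,
`s = √(a²+1)`, `p₁₂ = a + s`, `p₂₂ = √(1+2p₁₂)`, `p₁₁ = s·p₂₂`, the matrix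
`P = [[p₁₁,p₁₂],[p₁₂,p₂₂]]` is well defined and solves `PA + AᵀP − PBBᵀP + I₂ = 0`. -/
theorem sdre_closed_form_2d_nonlinear (ε x₁ : ℝ)
    (a s p₁₂ p₂₂ p₁₁ : ℝ)
    (ha : a = ε * x₁ ^ 2) (hs : s = Real.sqrt (a ^ 2 + 1))
    (h12 : p₁₂ = a + s) (h22 : p₂₂ = Real.sqrt (1 + 2 * p₁₂)) (h11 : p₁₁ = s * p₂₂)
    (P : Matrix (Fin 2) (Fin 2) ℝ) (hP : P = !![p₁₁, p₁₂; p₁₂, p₂₂])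
    (A : Matrix (Fin 2) (Fin 2) ℝ) (hA : A = !![0, 1; a, 0])
    (B : Matrix (Fin 2) (Fin 1) ℝ) (hB : B = !![0; 1]) :
    1 + 2 * p₁₂ > 0 ∧ P * A + Aᵀ * P - P * B * Bᵀ * P + 1 = 0 :=
  sdre_closed_form_2d_nonlinear_general a s p₁₂ p₂₂ p₁₁ hs h12 h22 h11 P hP A hA B hB
end

section
/- Let ε ∈ ℝ and x₁ ∈ ℝ, and set a = ε x₁², s = √(a² + 1), p₁₂ = a + s, p₂₂ = √(1 + 2p₁₂), p₁₁ = s · p₂₂, and P = [[p₁₁, p₁₂],[p₁₂, p₂₂]]. Then det P = 1 + √(ε² x₁⁴ + 1) and P is positive definite. -/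
/-!
With `s = √(a² + 1)` and `q = √(1 + 2(a + s))`, the identity `s² = a² + 1` makes
`det P = s q² - (a + s)² = 1 + s` a polynomial identity. Positive definiteness then follows
from the `2 × 2` Sylvester criterion, since `p₁₁ = s q > 0` and `det P = 1 + s > 0`.
-/

open Matrix

theorem quadratic_form_fin_two_pos {R : Type*} [Field R] [LinearOrder R] [IsStrictOrderedRing R]
    {p q r x y : R} (hp : 0 < p) (hdet : 0 < p * r - q * q) (hxy : x ≠ 0 ∨ y ≠ 0) :
    0 < p * x ^ 2 + 2 * q * x * y + r * y ^ 2 := by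
  have hcomplete : p * (p * x ^ 2 + 2 * q * x * y + r * y ^ 2) =
      (p * x + q * y) ^ 2 + (p * r - q * q) * y ^ 2 := by
    ring
  rcases eq_or_ne y 0 with rfl | hy
  · have hx : x ≠ 0 := hxy.resolve_right (not_not.mpr rfl)
    simpa using mul_pos hp (sq_pos_of_ne_zero hx)
  · refine pos_of_mul_pos_right (hcomplete ▸ ?_) hp.le
    positivity

theorem posDef_of_fin_two {R : Type*} [Field R] [LinearOrder R] [IsStrictOrderedRing R]
    [StarRing R] [TrivialStar R] {p q r : R} (hp : 0 < p) (hdet : 0 < p * r - q * q) :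
    (!![p, q; q, r]).PosDef := by
  refine posDef_iff_dotProduct_mulVec.mpr ⟨?_, fun v hv => ?_⟩
  · ext i j
    fin_cases i <;> fin_cases j <;> simp
  · have hv' : v 0 ≠ 0 ∨ v 1 ≠ 0 := by
      by_contra! h
      exact hv (funext fun i => by fin_cases i <;> simp [h.1, h.2])
    convert quadratic_form_fin_two_pos hp hdet hv' using 1
    simp only [dotProduct, Pi.star_apply, star_trivial, mulVec, of_apply, cons_val',
      cons_val_fin_one, Fin.sum_univ_two, Fin.isValue, cons_val_zero, cons_val_one]
    ring

theorem add_sqrt_sq_add_one_nonneg (a : ℝ) : 0 ≤ a + √(a ^ 2 + 1) := by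
  linarith [Real.neg_sqrt_le_of_sq_le (le_add_of_nonneg_right zero_le_one : a ^ 2 ≤ a ^ 2 + 1)]

theorem sdre_det_eq {a s q : ℝ} (hs : s ^ 2 = a ^ 2 + 1) (hq : q ^ 2 = 1 + 2 * (a + s)) :
    s * q * q - (a + s) * (a + s) = 1 + s := by
  linear_combination s * hq + hs

/-- For the closed-form SDRE solution `P` of the 2D nonlinear example (with `a = εx₁²`,
`s = √(a²+1)`, `p₁₂ = a + s`, `p₂₂ = √(1+2p₁₂)`, `p₁₁ = s·p₂₂`), one has
`det P = 1 + √(ε²x₁⁴ + 1)` and `P` is positive definite. -/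
theorem sdre_closed_form_det_posdef (ε x₁ : ℝ)
    (a s p₁₂ p₂₂ p₁₁ : ℝ)
    (ha : a = ε * x₁ ^ 2) (hs : s = Real.sqrt (a ^ 2 + 1))
    (h12 : p₁₂ = a + s) (h22 : p₂₂ = Real.sqrt (1 + 2 * p₁₂)) (h11 : p₁₁ = s * p₂₂)
    (P : Matrix (Fin 2) (Fin 2) ℝ) (hP : P = !![p₁₁, p₁₂; p₁₂, p₂₂]) :
    P.det = 1 + Real.sqrt (ε ^ 2 * x₁ ^ 4 + 1) ∧ P.PosDef := by
  subst hP h11 h22 h12 hs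
  have hp₁₂ : 0 ≤ a + √(a ^ 2 + 1) := add_sqrt_sq_add_one_nonneg a
  have hdet := sdre_det_eq (a := a) (Real.sq_sqrt (by positivity))
    (Real.sq_sqrt (by linarith : 0 ≤ 1 + 2 * (a + √(a ^ 2 + 1))))
  have hs_pos : 0 < √(a ^ 2 + 1) := Real.sqrt_pos.mpr (by positivity)
  have hq_pos : 0 < √(1 + 2 * (a + √(a ^ 2 + 1))) := Real.sqrt_pos.mpr (by linarith)
  refine ⟨?_, posDef_of_fin_two (mul_pos hs_pos hq_pos) (hdet ▸ by positivity)⟩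
  rw [det_fin_two_of, hdet, ha]
  ring_nf
end

section
/- Let x ∈ ℝ² with x ≠ 0, and define y(t) = e^{√6 t} x and u(t) = −(1−√6) y(t) for t ≥ 0. Then the cost integral diverges: ½ ∫₀^T ( ‖y(t)‖² + (1/5)‖u(t)‖² ) dt → ∞ as T → ∞. -/
open Matrix Filter intervalIntegral

/-! Along `y(t) = e^{√6 t} x` the running cost is at least `‖y t‖² ≥ ‖x‖² > 0` for `t ≥ 0`,
so the cost over `[0, T]` is at least `‖x‖² T / 2`, which is unbounded. -/

lemma tendsto_integral_atTop_of_pos_le {f : ℝ → ℝ} {c : ℝ} (hc : 0 < c)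
    (hf : ∀ T, IntervalIntegrable f MeasureTheory.volume 0 T) (hle : ∀ t, 0 ≤ t → c ≤ f t) :
    Tendsto (fun T => ∫ t in (0 : ℝ)..T, f t) atTop atTop := by
  refine tendsto_atTop_mono' atTop ?_ (tendsto_id.const_mul_atTop hc)
  filter_upwards [eventually_ge_atTop 0] with T hT
  calc c * T = ∫ _ in (0 : ℝ)..T, c := by simp [mul_comm]
    _ ≤ ∫ t in (0 : ℝ)..T, f t :=
      integral_mono_on hT intervalIntegrable_const (hf T) fun t ht => hle t ht.1

lemma norm_le_norm_exp_smul {E : Type*} [NormedAddCommGroup E] [NormedSpace ℝ E] (x : E)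
    {s : ℝ} (hs : 0 ≤ s) : ‖x‖ ≤ ‖Real.exp s • x‖ := by
  rw [norm_smul, Real.norm_of_nonneg (Real.exp_pos s).le]
  exact le_mul_of_one_le_left (norm_nonneg x) (Real.one_le_exp hs)

/-- For `x ≠ 0`, `y(t) = e^{√6 t}x` and `u(t) = −(1−√6)y(t)`, the LQR cost diverges:
`½∫₀^T (‖y‖² + (1/5)‖u‖²) dt → ∞` as `T → ∞`. -/
theorem cost_of_destabilizing_feedback_diverges (x : EuclideanSpace ℝ (Fin 2))
    (hx : x ≠ 0)
    (y : ℝ → EuclideanSpace ℝ (Fin 2)) (u : ℝ → EuclideanSpace ℝ (Fin 2))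
    (hy : ∀ t, y t = Real.exp (Real.sqrt 6 * t) • x)
    (hu : ∀ t, u t = -((1 - Real.sqrt 6) • y t)) :
    Tendsto (fun T : ℝ => (1/2) * ∫ t in (0 : ℝ)..T, (‖y t‖ ^ 2 + (1/5) * ‖u t‖ ^ 2))
      atTop atTop := by
  obtain rfl : y = fun t => Real.exp (Real.sqrt 6 * t) • x := funext hy
  obtain rfl : u = fun t => -((1 - Real.sqrt 6) • Real.exp (Real.sqrt 6 * t) • x) := funext hu
  have hcost_ge : ∀ t : ℝ, 0 ≤ t → ‖x‖ ^ 2 ≤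
      ‖Real.exp (Real.sqrt 6 * t) • x‖ ^ 2 +
        (1/5) * ‖-((1 - Real.sqrt 6) • Real.exp (Real.sqrt 6 * t) • x)‖ ^ 2 := fun t ht => by
    have := norm_le_norm_exp_smul x (mul_nonneg (Real.sqrt_nonneg 6) ht)
    nlinarith [norm_nonneg x]
  exact Tendsto.const_mul_atTop (by norm_num) (tendsto_integral_atTop_of_pos_le
    (pow_pos (norm_pos_iff.mpr hx) 2) (fun T => Continuous.intervalIntegrable (by fun_prop) 0 T) hcost_ge)
end
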